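/- Pointwise deterministic bound (Theorem 1): with ‖W⁽ⁱ⁾_k‖ ≤ W_B, ‖f⁽ⁱ⁻¹⁾(x)‖ ≤ √η, ‖P‖ ≤ 1, B⁽ⁱ⁾ - 𝒯⁽ⁱ⁾ = s·U⁽ⁱ⁾V⁽ⁱ⁾ with U⁽ⁱ⁾, V⁽ⁱ⁾ orthogonal, the difference of the d-layer costs satisfies ‖H(θ̂_k) - 𝓗(θ̂_k)‖ ≤ d·(|s|/2)·‖ε_k‖·W_B·√η + ‖ξ‖. -/
import Mathlib


open Matrix

attribute [local instance] Matrix.frobeniusSeminormedAddCommGroup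
attribute [local instance] Matrix.frobeniusNormedSpace

lemma frob_sq {n : ℕ} (A : Matrix (Fin n) (Fin n) ℝ) :
    ‖A‖ ^ 2 = ∑ i, ∑ j, A i j ^ 2 := by
  rw [Matrix.frobenius_norm_def, ← Real.rpow_natCast _ 2, ← Real.rpow_mul (by positivity)]
  norm_num

lemma frob_trace_sq {n : ℕ} (A : Matrix (Fin n) (Fin n) ℝ) :
    (Aᵀ * A).trace = ‖A‖ ^ 2 := by
  rw [frob_sq, Matrix.trace, Finset.sum_comm]
  simp [Matrix.diag, Matrix.mul_apply, Matrix.transpose_apply, sq]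

lemma norm_mul_orth {n : ℕ} (A Q : Matrix (Fin n) (Fin n) ℝ)
    (hQ : Qᵀ * Q = 1) : ‖A * Q‖ = ‖A‖ := by
  have h2 : ‖A * Q‖ ^ 2 = ‖A‖ ^ 2 := by
    rw [← frob_trace_sq, ← frob_trace_sq, Matrix.transpose_mul]
    rw [show Qᵀ * Aᵀ * (A * Q) = Qᵀ * ((Aᵀ * A) * Q) by
      rw [Matrix.mul_assoc, Matrix.mul_assoc]]
    rw [← Matrix.trace_mul_comm, Matrix.mul_assoc, mul_eq_one_comm.mp hQ, Matrix.mul_one]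
  rw [← Real.sqrt_sq (norm_nonneg (A * Q)), h2, Real.sqrt_sq (norm_nonneg A)]

lemma frob_sq' {n : ℕ} (A : Matrix (Fin n) (Fin n) ℝ) :
    ‖A‖ ^ 2 = ∑ p : Fin n × Fin n, A p.1 p.2 ^ 2 := by
  rw [frob_sq, Fintype.sum_prod_type]

lemma trace_cs {n : ℕ} (A C : Matrix (Fin n) (Fin n) ℝ) :
    |(Aᵀ * C).trace| ≤ ‖A‖ * ‖C‖ := by
  have ht : (Aᵀ * C).trace = ∑ p : Fin n × Fin n, A p.1 p.2 * C p.1 p.2 := by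
    rw [Matrix.trace, Fintype.sum_prod_type, Finset.sum_comm]
    simp [Matrix.diag, Matrix.mul_apply, Matrix.transpose_apply]
  have key : ((Aᵀ * C).trace) ^ 2 ≤ (‖A‖ * ‖C‖) ^ 2 := by
    rw [ht, mul_pow, frob_sq', frob_sq']
    exact Finset.sum_mul_sq_le_sq_mul_sq _ _ _
  calc |(Aᵀ * C).trace| = Real.sqrt (((Aᵀ * C).trace) ^ 2) := (Real.sqrt_sq_eq_abs _).symm
    _ ≤ Real.sqrt ((‖A‖ * ‖C‖) ^ 2) := Real.sqrt_le_sqrt key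
    _ = ‖A‖ * ‖C‖ := Real.sqrt_sq (by positivity)

/-- Theorem 1 (pointwise deterministic bound): with layer-wise weights bounded by `W_B`,
activations bounded by `√η`, `‖P‖ ≤ 1`, and `B i - T i = s • (U i * V i)` for orthogonal
`U i`, `V i`, the difference between the original cost
`H = Σᵢ ½[tr((ε f T)ᵀ P W) + λ R] + ξ` and the EDL cost
`𝓗 = Σᵢ ½[tr((ε f B)ᵀ P W) + λ R]` satisfies
`|H - 𝓗| ≤ d (|s|/2) |ε| W_B √η + |ξ|`. -/
theorem stmt_7 (n d : ℕ) (ε s ξ W_B η : ℝ)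
    (f T B U V W : Fin d → Matrix (Fin n) (Fin n) ℝ)
    (lam R : Fin d → ℝ) (P : Matrix (Fin n) (Fin n) ℝ)
    (hW : ∀ i, ‖W i‖ ≤ W_B) (hf : ∀ i, ‖f i‖ ≤ Real.sqrt η) (hP : ‖P‖ ≤ 1)
    (hU : ∀ i, (U i)ᵀ * U i = 1) (hV : ∀ i, (V i)ᵀ * V i = 1)
    (hB : ∀ i, B i - T i = s • (U i * V i)) :
    |(∑ i, (1 / 2 : ℝ) * (((ε • (f i * T i))ᵀ * P * W i).trace + lam i * R i) + ξ) -
        ∑ i, (1 / 2 : ℝ) * (((ε • (f i * B i))ᵀ * P * W i).trace + lam i * R i)| ≤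
      d * (|s| / 2) * |ε| * W_B * Real.sqrt η + |ξ| := by
  set c : ℝ := (|s| / 2) * |ε| * W_B * Real.sqrt η with hc
  have key : ∀ i : Fin d,
      |(1 / 2 : ℝ) * (((ε • (f i * T i))ᵀ * P * W i).trace + lam i * R i) -
        (1 / 2 : ℝ) * (((ε • (f i * B i))ᵀ * P * W i).trace + lam i * R i)| ≤ c := by
    intro i
    have hWB : (0 : ℝ) ≤ W_B := le_trans (norm_nonneg _) (hW i)
    have h1 : f i * T i - f i * B i = (-s) • (f i * (U i * V i)) := by
      rw [← Matrix.mul_sub, show T i - B i = (-s) • (U i * V i) by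
        rw [neg_smul, ← hB i]; abel, Matrix.mul_smul]
    have h2 : ((f i * T i)ᵀ * P * W i).trace - ((f i * B i)ᵀ * P * W i).trace
        = (-s) * ((f i * (U i * V i))ᵀ * (P * W i)).trace := by
      rw [← Matrix.trace_sub, ← Matrix.sub_mul, ← Matrix.sub_mul, ← Matrix.transpose_sub, h1,
        Matrix.transpose_smul, Matrix.smul_mul, Matrix.smul_mul, Matrix.trace_smul,
        smul_eq_mul, Matrix.mul_assoc]
    have h3 : (1 / 2 : ℝ) * (((ε • (f i * T i))ᵀ * P * W i).trace + lam i * R i) -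
        (1 / 2 : ℝ) * (((ε • (f i * B i))ᵀ * P * W i).trace + lam i * R i)
        = (1 / 2 : ℝ) * (ε * ((-s) * ((f i * (U i * V i))ᵀ * (P * W i)).trace)) := by
      simp only [Matrix.transpose_smul, Matrix.smul_mul, Matrix.trace_smul, smul_eq_mul]
      rw [← h2]; ring
    rw [h3]
    have horth : (U i * V i)ᵀ * (U i * V i) = 1 := by
      rw [Matrix.transpose_mul, Matrix.mul_assoc, ← Matrix.mul_assoc (U i)ᵀ, hU i,
        Matrix.one_mul, hV i]
    have hX : ‖f i * (U i * V i)‖ ≤ Real.sqrt η := by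
      rw [norm_mul_orth _ _ horth]; exact hf i
    have hPW : ‖P * W i‖ ≤ W_B := by
      calc ‖P * W i‖ ≤ ‖P‖ * ‖W i‖ := Matrix.frobenius_norm_mul _ _
        _ ≤ 1 * W_B := by
            apply mul_le_mul hP (hW i) (norm_nonneg _) (by norm_num)
        _ = W_B := one_mul _
    have hcs := trace_cs (f i * (U i * V i)) (P * W i)
    have hη : (0 : ℝ) ≤ Real.sqrt η := Real.sqrt_nonneg _
    have hXn : (0 : ℝ) ≤ ‖f i * (U i * V i)‖ := norm_nonneg _
    have hPWn : (0 : ℝ) ≤ ‖P * W i‖ := norm_nonneg _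
    have habs : |((f i * (U i * V i))ᵀ * (P * W i)).trace| ≤ Real.sqrt η * W_B := by
      calc |((f i * (U i * V i))ᵀ * (P * W i)).trace|
          ≤ ‖f i * (U i * V i)‖ * ‖P * W i‖ := hcs
        _ ≤ Real.sqrt η * W_B := mul_le_mul hX hPW hPWn hη
    rw [hc, abs_mul, abs_mul, abs_mul, abs_neg]
    rw [show |(1 / 2 : ℝ)| = 1 / 2 by norm_num]
    nlinarith [mul_le_mul_of_nonneg_left habs (mul_nonneg (abs_nonneg ε) (abs_nonneg s)),
      abs_nonneg ε, abs_nonneg s]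
  have hsplit : (∑ i, (1 / 2 : ℝ) * (((ε • (f i * T i))ᵀ * P * W i).trace + lam i * R i) + ξ) -
      ∑ i, (1 / 2 : ℝ) * (((ε • (f i * B i))ᵀ * P * W i).trace + lam i * R i)
      = (∑ i, ((1 / 2 : ℝ) * (((ε • (f i * T i))ᵀ * P * W i).trace + lam i * R i) -
        (1 / 2 : ℝ) * (((ε • (f i * B i))ᵀ * P * W i).trace + lam i * R i))) + ξ := by
    rw [Finset.sum_sub_distrib]; ring
  rw [hsplit]
  have h4 : |∑ i, ((1 / 2 : ℝ) * (((ε • (f i * T i))ᵀ * P * W i).trace + lam i * R i) -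
      (1 / 2 : ℝ) * (((ε • (f i * B i))ᵀ * P * W i).trace + lam i * R i))| ≤ d * c := by
    calc |∑ i, _| ≤ ∑ i : Fin d, c :=
          le_trans (Finset.abs_sum_le_sum_abs _ _) (Finset.sum_le_sum fun i _ => key i)
      _ = d * c := by simp [Finset.sum_const, Finset.card_univ, nsmul_eq_mul]
  calc |_ + ξ| ≤ |∑ i, ((1 / 2 : ℝ) * (((ε • (f i * T i))ᵀ * P * W i).trace + lam i * R i) -
        (1 / 2 : ℝ) * (((ε • (f i * B i))ᵀ * P * W i).trace + lam i * R i))| + |ξ| := abs_add_le _ _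
    _ ≤ d * c + |ξ| := by linarith
    _ = d * (|s| / 2) * |ε| * W_B * Real.sqrt η + |ξ| := by rw [hc]; ring
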